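/- For all integers n ≥ 1 and k ≥ 1, if (Q,Σ,δ,q_0) is an initially-connected complete deterministic finite automaton structure with n states over a k-letter alphabet, and its states are relabelled 0,…,n−1 by the canonical breadth-first order (exploring from q_0 and taking outgoing edges in the fixed alphabet order σ_0 < ⋯ < σ_{k−1}), then the string (s_i)_{i∈[0,kn−1]} defined by s_i = δ(⌊i/k⌋, σ_{i mod k}) satisfies rules (R1) and (R2). -/

import Mathlib

/-- Rule (R1) for a natural-valued string of length `k*n`. -/
def RuleR1 (n k : ℕ) (s : ℕ → ℕ) : Prop :=
  ∀ m : ℕ, 2 ≤ m → m ≤ n - 1 → ∀ i < k * n, s i = m → ∃ j < i, s j = m - 1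

/-- Rule (R2) for a natural-valued string of length `k*n`. -/
def RuleR2 (n k : ℕ) (s : ℕ → ℕ) : Prop :=
  ∀ m : ℕ, 1 ≤ m → m ≤ n - 1 → ∃ j < k * m, s j = m

/-- A complete DFA structure with `n` states over a `k`-letter alphabet. -/
structure DFAStruct (n k : ℕ) where
  delta : Fin n → Fin k → Fin n
  q0 : Fin n

/-- Extension of the transition function to words. -/
def deltaStar {n k : ℕ} (d : Fin n → Fin k → Fin n) : Fin n → List (Fin k) → Fin n
  | q, [] => q
  | q, a :: w => deltaStar d (d q a) w

/-- Initially connected: every state is reachable from the initial state. -/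
def InitiallyConn {n k : ℕ} (A : DFAStruct n k) : Prop :=
  ∀ q : Fin n, ∃ w : List (Fin k), deltaStar A.delta A.q0 w = q

/-- The list of states in canonical breadth-first discovery order: starting
from the initial state, repeatedly process the `i`-th discovered state
(`i = 0, 1, …`), appending each not-yet-discovered target of its outgoing
transitions, taken in the alphabet order `σ₀ < σ₁ < ⋯ < σ_{k-1}`. -/
def bfsOrderList {n k : ℕ} (A : DFAStruct n k) : List (Fin n) :=
  (List.range n).foldl
    (fun visited i =>
      match visited[i]? with
      | none => visited
      | some q =>
          (List.finRange k).foldl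
            (fun v σ => if A.delta q σ ∈ v then v else v ++ [A.delta q σ]) visited)
    [A.q0]
/-!
Flatten the breadth-first search so that one step handles a single transition: step `i` reads
letter `i % k` out of the `(i / k)`-th listed state and appends its target if it is new. The
lists produced form a prefix chain ending in `bfsOrderList A`, and step `i` has its source listed
as long as the search has not stalled, which initial connectivity rules out before step `k n`.
The string value `s i` is the position of the target of step `i`, so the state at position `m`
is the target of the step `j` that lengthens the list from `m` to `m + 1`. That step reads from
a state at a position `< m`, whence `j < k m` (R2); and the state at position `m - 1` was
appended earlier than every step whose target sits at position `m` (R1).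
-/

theorem List.foldl_eq_foldl_of_invariant {α β : Type*} {P : β → Prop} {f g : β → α → β}
    (hfg : ∀ b a, P b → f b a = g b a) (hP : ∀ b a, P b → P (f b a)) :
    ∀ (l : List α) (b : β), P b → l.foldl f b = l.foldl g b
  | [], _, _ => rfl
  | a :: l, b, hb => by
    rw [List.foldl_cons, List.foldl_cons, ← hfg b a hb]
    exact List.foldl_eq_foldl_of_invariant hfg hP l _ (hP b a hb)

theorem Fin.mul_add_val_div {k : ℕ} (p : ℕ) (a : Fin k) : (k * p + a) / k = p := by
  rw [Nat.mul_add_div a.pos, Nat.div_eq_of_lt a.isLt, add_zero]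

theorem Fin.mul_add_val_mod {k : ℕ} (p : ℕ) (a : Fin k) : (k * p + a) % k = a := by
  rw [Nat.mul_add_mod, Nat.mod_eq_of_lt a.isLt]

namespace DFAStruct

variable {n k : ℕ} (A : DFAStruct n k) (hk : 1 ≤ k)

def target (v : List (Fin n)) (i : ℕ) : Fin n :=
  A.delta (v.getD (i / k) A.q0) ⟨i % k, Nat.mod_lt i hk⟩

def Discovers (v : List (Fin n)) (i : ℕ) : Prop :=
  i / k < v.length ∧ A.target hk v i ∉ v

instance (v : List (Fin n)) (i : ℕ) : Decidable (A.Discovers hk v i) := by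
  unfold Discovers; infer_instance

def bfsStep (v : List (Fin n)) (i : ℕ) : List (Fin n) :=
  if A.Discovers hk v i then v ++ [A.target hk v i] else v

def bfsTrace (t : ℕ) : List (Fin n) :=
  (List.range t).foldl (A.bfsStep hk) [A.q0]

theorem target_mul_add (v : List (Fin n)) (p : ℕ) (a : Fin k) :
    A.target hk v (k * p + a) = A.delta (v.getD p A.q0) a := by
  simp only [target, Fin.mul_add_val_div, Fin.mul_add_val_mod]

theorem target_eq_of_prefix {v w : List (Fin n)} (h : v <+: w) {i : ℕ} (hi : i / k < v.length) :
    A.target hk w i = A.target hk v i := by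
  simp only [target, List.getD_eq_getElem _ _ hi,
    List.getD_eq_getElem _ _ (hi.trans_le h.length_le), h.getElem hi]

theorem prefix_bfsStep (v : List (Fin n)) (i : ℕ) : v <+: A.bfsStep hk v i := by
  unfold bfsStep
  split_ifs <;> simp

theorem nodup_bfsStep {v : List (Fin n)} (hv : v.Nodup) (i : ℕ) : (A.bfsStep hk v i).Nodup := by
  unfold bfsStep
  split_ifs with h
  · exact hv.append (List.nodup_singleton _) (by simpa using h.2)
  · exact hv

theorem bfsTrace_zero : A.bfsTrace hk 0 = [A.q0] := rfl

theorem bfsTrace_succ (t : ℕ) : A.bfsTrace hk (t + 1) = A.bfsStep hk (A.bfsTrace hk t) t := by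
  simp [bfsTrace, List.range_succ]

theorem bfsTrace_prefix {t t' : ℕ} (h : t ≤ t') : A.bfsTrace hk t <+: A.bfsTrace hk t' := by
  induction t', h using Nat.le_induction with
  | base => exact List.prefix_rfl
  | succ t' _ ih => exact ih.trans (A.bfsTrace_succ hk t' ▸ A.prefix_bfsStep hk _ _)

theorem nodup_bfsTrace (t : ℕ) : (A.bfsTrace hk t).Nodup := by
  induction t with
  | zero => simp [bfsTrace_zero]
  | succ t ih => exact A.bfsTrace_succ hk t ▸ A.nodup_bfsStep hk ih t

theorem length_bfsTrace_le (t : ℕ) : (A.bfsTrace hk t).length ≤ n := by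
  simpa using (A.nodup_bfsTrace hk t).length_le_card

theorem bfsTrace_eq_of_length_le {t t' : ℕ} (ht : (A.bfsTrace hk t).length ≤ t / k)
    (h : t ≤ t') : A.bfsTrace hk t' = A.bfsTrace hk t := by
  induction t', h using Nat.le_induction with
  | base => rfl
  | succ t' htt' ih =>
    have : t / k ≤ t' / k := Nat.div_le_div_right htt'
    rw [bfsTrace_succ, ih, bfsStep, if_neg (fun hd => absurd hd.1 (by omega))]

theorem div_lt_length_bfsTrace {t t' : ℕ} (h : t ≤ t')
    (ht' : t / k < (A.bfsTrace hk t').length) : t / k < (A.bfsTrace hk t).length := by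
  by_contra! hc
  rw [A.bfsTrace_eq_of_length_le hk hc h] at ht'
  omega

theorem target_mem_bfsTrace_succ {t : ℕ} (ht : t / k < (A.bfsTrace hk t).length) :
    A.target hk (A.bfsTrace hk t) t ∈ A.bfsTrace hk (t + 1) := by
  rw [bfsTrace_succ, bfsStep]
  split_ifs with hd
  · simp
  · simpa [Discovers, ht] using hd

theorem exists_discovers_of_lt_length {t m : ℕ} (hm : 1 ≤ m)
    (hmt : m < (A.bfsTrace hk t).length) :
    ∃ j < t, (A.bfsTrace hk j).length = m ∧ A.Discovers hk (A.bfsTrace hk j) j := by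
  induction t with
  | zero => simp [bfsTrace_zero] at hmt; omega
  | succ t ih =>
    by_cases hlt : m < (A.bfsTrace hk t).length
    · obtain ⟨j, hj, h⟩ := ih hlt
      exact ⟨j, by omega, h⟩
    · rw [bfsTrace_succ, bfsStep] at hmt
      split_ifs at hmt with hd
      · exact ⟨t, by omega, by simp at hmt; omega, hd⟩
      · exact absurd hmt hlt

theorem lt_mul_length_of_discovers {v : List (Fin n)} {j : ℕ} (hd : A.Discovers hk v j) :
    j < k * v.length := by
  have := hd.1
  rw [Nat.div_lt_iff_lt_mul hk] at this
  linarith [mul_comm k v.length]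

theorem idxOf_target_of_discovers {j t : ℕ} (hjt : j < t)
    (hd : A.Discovers hk (A.bfsTrace hk j) j) :
    (A.bfsTrace hk t).idxOf (A.target hk (A.bfsTrace hk t) j) = (A.bfsTrace hk j).length := by
  have hpre := A.bfsTrace_prefix hk hjt
  rw [bfsTrace_succ, bfsStep, if_pos hd] at hpre
  rw [A.target_eq_of_prefix hk ((List.prefix_append _ _).trans hpre) hd.1,
    ← hpre.idxOf_eq_of_mem (by simp), List.idxOf_append_of_notMem hd.2]
  simp

theorem idxOf_target_lt_length_bfsTrace_succ {i t : ℕ} (hit : i < t)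
    (hi : i / k < (A.bfsTrace hk i).length) :
    (A.bfsTrace hk t).idxOf (A.target hk (A.bfsTrace hk t) i) < (A.bfsTrace hk (i + 1)).length := by
  rw [← (A.bfsTrace_prefix hk hit).mem_iff_idxOf_lt_length,
    A.target_eq_of_prefix hk (A.bfsTrace_prefix hk hit.le) hi]
  exact A.target_mem_bfsTrace_succ hk hi

theorem delta_mem_bfsTrace {q : Fin n} (hq : q ∈ A.bfsTrace hk (k * n)) (a : Fin k) :
    A.delta q a ∈ A.bfsTrace hk (k * n) := by
  obtain ⟨p, hp, rfl⟩ := List.getElem_of_mem hq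
  have hpn : p < n := hp.trans_le (A.length_bfsTrace_le hk _)
  have hi : k * p + a < k * n := by nlinarith [a.isLt]
  have hsrc := A.div_lt_length_bfsTrace hk hi.le (by rwa [Fin.mul_add_val_div])
  have hmem := (A.bfsTrace_prefix hk hi).subset (A.target_mem_bfsTrace_succ hk hsrc)
  rwa [← A.target_eq_of_prefix hk (A.bfsTrace_prefix hk hi.le) hsrc, A.target_mul_add hk,
    List.getD_eq_getElem _ _ hp] at hmem

theorem deltaStar_mem_bfsTrace {q : Fin n} (hq : q ∈ A.bfsTrace hk (k * n)) (w : List (Fin k)) :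
    deltaStar A.delta q w ∈ A.bfsTrace hk (k * n) := by
  induction w generalizing q with
  | nil => exact hq
  | cons a w ih => exact ih (A.delta_mem_bfsTrace hk hq a)

theorem mem_bfsTrace_of_initiallyConn (hA : InitiallyConn A) (q : Fin n) :
    q ∈ A.bfsTrace hk (k * n) := by
  obtain ⟨w, rfl⟩ := hA q
  have hq0 : A.q0 ∈ A.bfsTrace hk (k * n) :=
    (A.bfsTrace_prefix hk (Nat.zero_le _)).subset (by simp [bfsTrace_zero])
  exact A.deltaStar_mem_bfsTrace hk hq0 w

theorem length_bfsTrace_of_initiallyConn (hA : InitiallyConn A) :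
    (A.bfsTrace hk (k * n)).length = n := by
  refine le_antisymm (A.length_bfsTrace_le hk _) ?_
  simpa using ((List.nodup_finRange n).subperm fun q _ =>
    A.mem_bfsTrace_of_initiallyConn hk hA q).length_le

def bfsOuterStep (v : List (Fin n)) (p : ℕ) : List (Fin n) :=
  match v[p]? with
  | none => v
  | some q =>
      (List.finRange k).foldl
        (fun v σ => if A.delta q σ ∈ v then v else v ++ [A.delta q σ]) v

theorem foldl_bfsStep_block (v : List (Fin n)) (p : ℕ) :
    (List.range k).foldl (fun w a => A.bfsStep hk w (k * p + a)) v = A.bfsOuterStep v p := by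
  unfold bfsOuterStep
  split
  next hp =>
    refine List.foldl_fixed' (fun a => if_neg fun hd => ?_) _
    have := hd.1
    rw [Nat.mul_add_div hk] at this
    simp at hp
    have := Nat.le_add_right p (a / k)
    omega
  next q hp =>
    obtain ⟨hpv, rfl⟩ := List.getElem?_eq_some_iff.mp hp
    rw [← List.map_coe_finRange_eq_range, List.foldl_map]
    refine List.foldl_eq_foldl_of_invariant (P := (v <+: ·)) (fun w a hw => ?_)
      (fun w a hw => hw.trans (A.prefix_bfsStep hk _ _)) _ _ List.prefix_rfl
    have hpw := hpv.trans_le hw.length_le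
    simp only [bfsStep, Discovers, A.target_mul_add hk, List.getD_eq_getElem _ _ hpw, ← hw.getElem hpv]
    by_cases h : A.delta v[p] a ∈ w <;> simp [h, Fin.mul_add_val_div, hpw]

theorem foldl_bfsOuterStep (T : ℕ) :
    (List.range T).foldl A.bfsOuterStep [A.q0] = A.bfsTrace hk (k * T) := by
  induction T with
  | zero => rfl
  | succ T ih =>
    rw [List.range_succ, List.foldl_append, ih, List.foldl_cons, List.foldl_nil,
      ← A.foldl_bfsStep_block hk, Nat.mul_succ, bfsTrace, bfsTrace, List.range_add,
      List.foldl_append, List.foldl_map]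

theorem bfsOrderList_eq : bfsOrderList A = A.bfsTrace hk (k * n) :=
  A.foldl_bfsOuterStep hk n

end DFAStruct

theorem stmt1_general (n k : ℕ) (hk : 1 ≤ k)
    (A : DFAStruct n k) (hA : InitiallyConn A)
    (s : ℕ → ℕ)
    (hs : ∀ i < k * n,
      s i = (bfsOrderList A).idxOf
        (A.delta ((bfsOrderList A).getD (i / k) A.q0) ⟨i % k, Nat.mod_lt i hk⟩)) :
    (∀ i < k * n, s i < n) ∧ RuleR1 n k s ∧ RuleR2 n k s := by
  rw [A.bfsOrderList_eq hk] at hs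
  change ∀ i < k * n, s i = (A.bfsTrace hk (k * n)).idxOf (A.target hk _ i) at hs
  have hlen := A.length_bfsTrace_of_initiallyConn hk hA
  have hsrc (i : ℕ) (hi : i < k * n) : i / k < (A.bfsTrace hk i).length :=
    A.div_lt_length_bfsTrace hk hi.le (by rw [hlen, Nat.div_lt_iff_lt_mul hk]; linarith)
  have hs_discovers (j : ℕ) (hj : j < k * n) (hd : A.Discovers hk (A.bfsTrace hk j) j) :
      s j = (A.bfsTrace hk j).length :=
    (hs j hj).trans (A.idxOf_target_of_discovers hk hj hd)
  refine ⟨fun i hi => ?_, fun m hm2 hmn i hi hsi => ?_, fun m hm1 hmn => ?_⟩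
  · rw [hs i hi]
    exact hlen.le.trans' (List.idxOf_lt_length_of_mem (A.mem_bfsTrace_of_initiallyConn hk hA _))
  · have hmi := A.idxOf_target_lt_length_bfsTrace_succ hk hi (hsrc i hi)
    rw [← hs i hi, hsi] at hmi
    obtain ⟨j', hj', hlen', -⟩ := A.exists_discovers_of_lt_length hk (by omega) hmi
    obtain ⟨j, hj, hlenj, hd⟩ :=
      A.exists_discovers_of_lt_length hk (t := j') (m := m - 1) (by omega) (by omega)
    exact ⟨j, by omega, by rw [hs_discovers j (by omega) hd, hlenj]⟩
  · obtain ⟨j, hj, hlenj, hd⟩ :=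
      A.exists_discovers_of_lt_length hk (t := k * n) hm1 (by omega)
    exact ⟨j, hlenj ▸ A.lt_mul_length_of_discovers hk hd, by rw [hs_discovers j hj hd, hlenj]⟩

/-- If the states of an initially-connected complete DFA structure are
relabelled `0, …, n-1` according to the canonical breadth-first order, then
the induced string `s i = δ(⌊i/k⌋, σ_{i mod k})` takes values in `[0, n-1]`
and satisfies rules (R1) and (R2). -/
theorem stmt1 (n k : ℕ) (hn : 1 ≤ n) (hk : 1 ≤ k)
    (A : DFAStruct n k) (hA : InitiallyConn A)
    (s : ℕ → ℕ)
    (hs : ∀ i < k * n,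
      s i = (bfsOrderList A).idxOf
        (A.delta ((bfsOrderList A).getD (i / k) A.q0) ⟨i % k, Nat.mod_lt i hk⟩)) :
    (∀ i < k * n, s i < n) ∧ RuleR1 n k s ∧ RuleR2 n k s :=
  stmt1_general n k hk A hA s hs
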